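/- arXiv:1908.07870 — 2 statements merged into one kernel-verified Lean document; each statement's English description precedes it below -/
import Mathlib

section
/- Monotonicity: let α > 0 and suppose the achievement matrix x is obtained from y by a deprived increment among the poor, i.e. there is a single entry (i', j') with x_{i'j'} > y_{i'j'}, all other entries of x and y coincide, y_{i'j'} < z_{j'}, and person i' is poor in y (ρ_k(y_{i'}) = 1). Then FGT_α(x; z) < FGT_α(y; z). -/
open Finset

/-- Deprivation gap `r_{ij}^α` for an achievement row `y` (convention `0 ^ (0:ℝ) = 1`). -/
noncomputable def gap {d : ℕ} (z y : Fin d → ℝ) (α : ℝ) (j : Fin d) : ℝ :=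
  if y j ≤ z j then ((z j - y j) / z j) ^ α else 0

/-- Network-adjusted deprivation `D_{ij}^α`. -/
noncomputable def Dnet {d : ℕ} (M : Fin d → Fin d → ℝ) (z y : Fin d → ℝ) (α : ℝ)
    (j : Fin d) : ℝ :=
  gap z y α j + (1 / ((d : ℝ) - 1)) * ∑ j' ∈ Finset.univ.erase j, M j j' * gap z y α j'

/-- Sum `Σ_j` of the `j`-th column of `M`. -/
noncomputable def colSum {d : ℕ} (M : Fin d → Fin d → ℝ) (j : Fin d) : ℝ := ∑ j', M j' j

/-- Weighted deprivation count `D_i = Σ_j w_j D_{ij}^0`. -/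
noncomputable def Dcount {d : ℕ} (M : Fin d → Fin d → ℝ) (z w y : Fin d → ℝ) : ℝ :=
  ∑ j, w j * Dnet M z y 0 j

/-- Dual-cutoff identification function `ρ_k`. -/
noncomputable def rho {d : ℕ} (M : Fin d → Fin d → ℝ) (z w : Fin d → ℝ) (k : ℝ)
    (y : Fin d → ℝ) : ℝ :=
  if k ≤ Dcount M z w y then 1 else 0

/-- Network-adjusted FGT measure with normalizing constant `dt`. -/
noncomputable def FGT {N d : ℕ} (M : Fin d → Fin d → ℝ) (z w : Fin d → ℝ) (k α dt : ℝ)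
    (y : Fin N → Fin d → ℝ) : ℝ :=
  (1 / ((N : ℝ) * dt)) * ∑ i, ∑ j, w j * Dnet M z (y i) α j * rho M z w k (y i)

/-
Raising one deprived achievement of a poor person weakly lowers every deprivation gap of that
person and strictly lowers the raised one (as `α > 0`), so every network-adjusted deprivation of
the person weakly drops and the one in the raised dimension strictly drops. Their weighted sum
is nonnegative and `ρ_k ≤ 1`, so the person's contribution after the increment is at most that
weighted sum, which is strictly below the contribution before, where `ρ_k = 1`. All other people
are unchanged and the normalising factor `1 / (N d̃)` is positive because `d̃ ≥ k > 0`.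
-/

section Deprivation

variable {d : ℕ} {M : Fin d → Fin d → ℝ} {z u v : Fin d → ℝ} {α : ℝ}

lemma gap_nonneg (j : Fin d) (hz : 0 ≤ z j) : 0 ≤ gap z v α j := by
  unfold gap
  split_ifs with h
  · exact Real.rpow_nonneg (div_nonneg (sub_nonneg.mpr h) hz) α
  · exact le_rfl

lemma gap_le_gap_of_le (j : Fin d) (hz : 0 < z j) (hα : 0 ≤ α) (h : v j ≤ u j) :
    gap z u α j ≤ gap z v α j := by
  by_cases hu : u j ≤ z j
  · have hv : v j ≤ z j := h.trans hu
    simp only [gap, if_pos hu, if_pos hv]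
    exact Real.rpow_le_rpow (div_nonneg (sub_nonneg.mpr hu) hz.le) (by gcongr) hα
  · simpa only [gap, if_neg hu] using gap_nonneg j hz.le

lemma gap_lt_gap_of_lt (j : Fin d) (hz : 0 < z j) (hα : 0 < α) (hdep : v j < z j)
    (h : v j < u j) : gap z u α j < gap z v α j := by
  by_cases hu : u j ≤ z j
  · simp only [gap, if_pos hu, if_pos hdep.le]
    exact Real.rpow_lt_rpow (div_nonneg (sub_nonneg.mpr hu) hz.le) (by gcongr) hα
  · simp only [gap, if_neg hu, if_pos hdep.le]
    exact Real.rpow_pos_of_pos (div_pos (sub_pos.mpr hdep) hz) α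

lemma one_div_card_sub_one_nonneg (j : Fin d) : 0 ≤ 1 / ((d : ℝ) - 1) :=
  one_div_nonneg.mpr (sub_nonneg.mpr (Nat.one_le_cast.mpr j.pos))

lemma Dnet_nonneg (hz : ∀ j, 0 ≤ z j) (hM : ∀ j j', 0 ≤ M j j') (j : Fin d) :
    0 ≤ Dnet M z v α j :=
  add_nonneg (gap_nonneg j (hz j)) (mul_nonneg (one_div_card_sub_one_nonneg j)
    (sum_nonneg fun j' _ => mul_nonneg (hM j j') (gap_nonneg j' (hz j'))))

lemma Dnet_le_Dnet (hM : ∀ j j', 0 ≤ M j j') (hgap : ∀ j, gap z u α j ≤ gap z v α j)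
    (j : Fin d) : Dnet M z u α j ≤ Dnet M z v α j :=
  add_le_add (hgap j) (mul_le_mul_of_nonneg_left
    (sum_le_sum fun j' _ => mul_le_mul_of_nonneg_left (hgap j') (hM j j'))
    (one_div_card_sub_one_nonneg j))

lemma Dnet_lt_Dnet (hM : ∀ j j', 0 ≤ M j j') (hgap : ∀ j, gap z u α j ≤ gap z v α j)
    (j : Fin d) (hlt : gap z u α j < gap z v α j) : Dnet M z u α j < Dnet M z v α j :=
  add_lt_add_of_lt_of_le hlt (mul_le_mul_of_nonneg_left
    (sum_le_sum fun j' _ => mul_le_mul_of_nonneg_left (hgap j') (hM j j'))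
    (one_div_card_sub_one_nonneg j))

end Deprivation

section Contribution

variable {d : ℕ} {M : Fin d → Fin d → ℝ} {z w u v : Fin d → ℝ} {k α : ℝ}

lemma rho_le_one (y : Fin d → ℝ) : rho M z w k y ≤ 1 := by
  unfold rho; split_ifs <;> norm_num

lemma sum_weighted_Dnet_lt (hM : ∀ j j', 0 ≤ M j j') (hw : ∀ j, 0 ≤ w j)
    (hgap : ∀ j, gap z u α j ≤ gap z v α j) (j₀ : Fin d) (hw₀ : 0 < w j₀)
    (hlt : gap z u α j₀ < gap z v α j₀) :
    ∑ j, w j * Dnet M z u α j < ∑ j, w j * Dnet M z v α j :=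
  sum_lt_sum (fun j _ => mul_le_mul_of_nonneg_left (Dnet_le_Dnet hM hgap j) (hw j))
    ⟨j₀, mem_univ j₀, mul_lt_mul_of_pos_left (Dnet_lt_Dnet hM hgap j₀ hlt) hw₀⟩

lemma sum_weighted_Dnet_mul_rho_le (hz : ∀ j, 0 ≤ z j) (hM : ∀ j j', 0 ≤ M j j')
    (hw : ∀ j, 0 ≤ w j) :
    ∑ j, w j * Dnet M z u α j * rho M z w k u ≤ ∑ j, w j * Dnet M z u α j := by
  rw [← sum_mul]
  exact mul_le_of_le_one_right
    (sum_nonneg fun j _ => mul_nonneg (hw j) (Dnet_nonneg hz hM j)) (rho_le_one u)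

lemma sum_weighted_Dnet_mul_rho_lt (hz : ∀ j, 0 ≤ z j) (hM : ∀ j j', 0 ≤ M j j')
    (hw : ∀ j, 0 ≤ w j) (hgap : ∀ j, gap z u α j ≤ gap z v α j) (j₀ : Fin d) (hw₀ : 0 < w j₀)
    (hlt : gap z u α j₀ < gap z v α j₀) (hpoor : rho M z w k v = 1) :
    ∑ j, w j * Dnet M z u α j * rho M z w k u < ∑ j, w j * Dnet M z v α j * rho M z w k v := by
  simp only [hpoor, mul_one]
  exact (sum_weighted_Dnet_mul_rho_le hz hM hw).trans_lt
    (sum_weighted_Dnet_lt hM hw hgap j₀ hw₀ hlt)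

end Contribution

lemma FGT_lt_FGT_of_row {N d : ℕ} {M : Fin d → Fin d → ℝ} {z w : Fin d → ℝ} {k α dt : ℝ}
    (hdt : 0 < dt) {x y : Fin N → Fin d → ℝ} (i₀ : Fin N) (hrow : ∀ i, i ≠ i₀ → x i = y i)
    (hlt : ∑ j, w j * Dnet M z (x i₀) α j * rho M z w k (x i₀) <
      ∑ j, w j * Dnet M z (y i₀) α j * rho M z w k (y i₀)) :
    FGT M z w k α dt x < FGT M z w k α dt y := by
  have hN : (0 : ℝ) < N := Nat.cast_pos.mpr i₀.pos
  refine mul_lt_mul_of_pos_left (sum_lt_sum (fun i _ => ?_) ⟨i₀, mem_univ i₀, hlt⟩)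
    (by positivity)
  by_cases hi : i = i₀
  · exact hi ▸ hlt.le
  · rw [hrow i hi]

theorem FGT_monotonicity_general
    (d : ℕ) (z : Fin d → ℝ) (hz : ∀ j, 0 < z j)
    (M : Fin d → Fin d → ℝ) (hM0 : ∀ j j', 0 ≤ M j j')
    (w : Fin d → ℝ) (hw : ∀ j, 0 < w j)
    (dt : ℝ)
    (k : ℝ) (hk0 : 0 < k) (hk1 : k ≤ dt) (α : ℝ) (hα : 0 < α)
    (N : ℕ)
    (x y : Fin N → Fin d → ℝ)
    (i' : Fin N) (j' : Fin d) (hgt : y i' j' < x i' j') (hdep : y i' j' < z j')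
    (hother : ∀ i j, ¬(i = i' ∧ j = j') → x i j = y i j)
    (hpoor : rho M z w k (y i') = 1) :
    FGT M z w k α dt x < FGT M z w k α dt y := by
  have hrow : ∀ i, i ≠ i' → x i = y i := fun i hi =>
    funext fun j => hother i j fun h => hi h.1
  have hincr : ∀ j, y i' j ≤ x i' j := fun j => by
    by_cases hj : j = j'
    · exact hj ▸ hgt.le
    · exact (hother i' j fun h => hj h.2).ge
  refine FGT_lt_FGT_of_row (hk0.trans_le hk1) i' hrow ?_
  exact sum_weighted_Dnet_mul_rho_lt (fun j => (hz j).le) hM0 (fun j => (hw j).le)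
    (fun j => gap_le_gap_of_le j (hz j) hα.le (hincr j)) j' (hw j')
    (gap_lt_gap_of_lt j' (hz j') hα hdep hgt) hpoor

/-- monotonicity — for `α > 0`, a deprived increment among the poor strictly
decreases FGT. -/
theorem FGT_monotonicity
    (d : ℕ) (hd : 2 ≤ d) (z : Fin d → ℝ) (hz : ∀ j, 0 < z j)
    (M : Fin d → Fin d → ℝ) (hM0 : ∀ j j', 0 ≤ M j j') (hM1 : ∀ j j', M j j' ≤ 1)
    (hMdiag : ∀ j, M j j = 1)
    (w : Fin d → ℝ) (hw : ∀ j, 0 < w j) (hwsum : (∑ j, w j) = (d : ℝ))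
    (dt : ℝ) (hdt : dt = (d : ℝ) + ((∑ j, w j * colSum M j) - (d : ℝ)) / ((d : ℝ) - 1))
    (k : ℝ) (hk0 : 0 < k) (hk1 : k ≤ dt) (α : ℝ) (hα : 0 < α)
    (N : ℕ) (hN : 1 ≤ N)
    (x y : Fin N → Fin d → ℝ) (hx : ∀ i j, 0 ≤ x i j) (hy : ∀ i j, 0 ≤ y i j)
    (i' : Fin N) (j' : Fin d) (hgt : y i' j' < x i' j') (hdep : y i' j' < z j')
    (hother : ∀ i j, ¬(i = i' ∧ j = j') → x i j = y i j)
    (hpoor : rho M z w k (y i') = 1) :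
    FGT M z w k α dt x < FGT M z w k α dt y :=
  FGT_monotonicity_general d z hz M hM0 w hw dt k hk0 hk1 α hα N x y i' j' hgt hdep hother hpoor
end

section
/- Implied-weight representation of the unweighted network measure: let w_j = 1 for all j, so d̃ = d̄ := d + (Σ − d)/(d−1), and define δ_j := 1 + (Σ_j − 1)/(d−1) and implied weights w̃_j := d·δ_j/d̄. Then each w̃_j > 0, Σ_{j=1}^d w̃_j = d, and for every achievement matrix y and every α ≥ 0, FGT_α(y; z) = (1/(N d)) Σ_{i=1}^N Σ_{j=1}^d w̃_j r_{ij}^α ρ_k(y_i); that is, the unweighted network-adjusted FGT measure coincides with a standard weighted adjusted FGT measure with weights w̃ summing to d. -/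
open Finset

/-!
Summing the network-adjusted deprivations over dimensions and exchanging the order of summation,
the gap `r_{j'}` in dimension `j'` is counted once for itself and `M j j' / (d - 1)` times for
each `j ≠ j'`, i.e. with total coefficient `δ_{j'} = 1 + (Σ_{j'} - 1) / (d - 1)` (the diagonal
entry `M j' j' = 1` is the one subtracted). Hence each person's row sum `Σ_j D_j^α` equals
`Σ_j δ_j r_j^α`, while `Σ_j δ_j = d̄`; the normalisation `1 / d̄` then turns `δ` into the implied
weights `w̃ = d δ / d̄`, which sum to `d`.
-/

noncomputable def colWeight {d : ℕ} (M : Fin d → Fin d → ℝ) (j : Fin d) : ℝ :=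
  1 + (colSum M j - 1) / ((d : ℝ) - 1)

section

variable {d : ℕ} {M : Fin d → Fin d → ℝ}

theorem one_le_colSum (hM0 : ∀ j j', 0 ≤ M j j') (hMdiag : ∀ j, M j j = 1) (j : Fin d) :
    1 ≤ colSum M j := by
  simpa [colSum, hMdiag j] using single_le_sum (f := fun j' => M j' j) (fun i _ => hM0 i j)
    (mem_univ j)

theorem colWeight_pos (hd : 1 < d) (hM0 : ∀ j j', 0 ≤ M j j') (hMdiag : ∀ j, M j j = 1)
    (j : Fin d) : 0 < colWeight M j := by
  have hd1 : (0 : ℝ) < (d : ℝ) - 1 := by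
    have : (1 : ℝ) < d := by exact_mod_cast hd
    linarith
  have := div_nonneg (sub_nonneg.2 (one_le_colSum hM0 hMdiag j)) hd1.le
  unfold colWeight
  linarith

theorem sum_colWeight (M : Fin d → Fin d → ℝ) :
    ∑ j, colWeight M j = (d : ℝ) + ((∑ j, ∑ j', M j j') - (d : ℝ)) / ((d : ℝ) - 1) := by
  simp only [colWeight, sum_add_distrib, ← sum_div, sum_sub_distrib, colSum]
  rw [sum_comm]
  simp

theorem sum_Dnet (hMdiag : ∀ j, M j j = 1) (z y : Fin d → ℝ) (α : ℝ) :
    ∑ j, Dnet M z y α j = ∑ j, colWeight M j * gap z y α j := by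
  set g := gap z y α
  have herase : ∀ j, ∑ j' ∈ univ.erase j, M j j' * g j' = ∑ j', M j j' * g j' - g j :=
    fun j => by rw [sum_erase_eq_sub (mem_univ j), hMdiag, one_mul]
  have hswap : ∑ j, ∑ j', M j j' * g j' = ∑ j, colSum M j * g j := by
    rw [sum_comm]
    simp only [colSum, sum_mul]
  calc ∑ j, Dnet M z y α j
      = ∑ j, g j + 1 / ((d : ℝ) - 1) * (∑ j, colSum M j * g j - ∑ j, g j) := by
        simp only [Dnet, herase, sum_add_distrib, ← mul_sum, sum_sub_distrib, hswap, g]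
    _ = ∑ j, colWeight M j * g j := by
        simp only [colWeight, add_mul, sub_mul, div_mul_eq_mul_div, ← sum_div, sum_add_distrib,
          sum_sub_distrib, one_mul]

theorem FGT_one_eq (hMdiag : ∀ j, M j j = 1) {N : ℕ} (z : Fin d → ℝ) (k α dt : ℝ)
    (y : Fin N → Fin d → ℝ) :
    FGT M z (fun _ => 1) k α dt y = (1 / ((N : ℝ) * dt)) *
      ∑ i, (∑ j, colWeight M j * gap z (y i) α j) * rho M z (fun _ => 1) k (y i) := by
  simp only [FGT, one_mul, ← sum_mul, sum_Dnet hMdiag]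

end

theorem FGT_implied_weights_general
    (d : ℕ) (hd : 2 ≤ d) (z : Fin d → ℝ)
    (M : Fin d → Fin d → ℝ) (hM0 : ∀ j j', 0 ≤ M j j')
    (hMdiag : ∀ j, M j j = 1)
    (db : ℝ) (hdb : db = (d : ℝ) + ((∑ j, ∑ j', M j j') - (d : ℝ)) / ((d : ℝ) - 1))
    (k : ℝ) (α : ℝ)
    (wt : Fin d → ℝ)
    (hwt : ∀ j, wt j = (d : ℝ) * (1 + (colSum M j - 1) / ((d : ℝ) - 1)) / db) :
    (∀ j, 0 < wt j) ∧ (∑ j, wt j) = (d : ℝ) ∧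
    (∀ (N : ℕ), 1 ≤ N → ∀ y : Fin N → Fin d → ℝ, (∀ i j, 0 ≤ y i j) →
      FGT M z (fun _ => 1) k α db y =
        (1 / ((N : ℝ) * (d : ℝ))) *
          ∑ i, ∑ j, wt j * gap z (y i) α j * rho M z (fun _ => 1) k (y i)) := by
  rw [← sum_colWeight] at hdb
  have hwt' : ∀ j, wt j = (d : ℝ) / db * colWeight M j := fun j => by
    rw [hwt, colWeight, div_mul_eq_mul_div, mul_div_right_comm]
  have hδ := colWeight_pos hd hM0 hMdiag
  have : NeZero d := ⟨by omega⟩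
  have hdb0 : 0 < db := hdb ▸ sum_pos (fun j _ => hδ j) univ_nonempty
  refine ⟨fun j => ?_, ?_, fun N _ y _ => ?_⟩
  · rw [hwt']
    exact mul_pos (div_pos (by positivity) hdb0) (hδ j)
  · rw [sum_congr rfl fun j _ => hwt' j, ← mul_sum, ← hdb]
    field_simp
  · simp only [FGT_one_eq hMdiag, sum_mul, hwt', mul_assoc, ← mul_sum]
    field_simp

/-- with `δ_j = 1 + (Σ_j − 1)/(d−1)` and implied weights `w̃_j = d·δ_j/d̄`,
one has `w̃_j > 0`, `Σ_j w̃_j = d`, and the unweighted network-adjusted FGT measure equals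
the standard weighted adjusted FGT measure with weights `w̃`. -/
theorem FGT_implied_weights
    (d : ℕ) (hd : 2 ≤ d) (z : Fin d → ℝ) (hz : ∀ j, 0 < z j)
    (M : Fin d → Fin d → ℝ) (hM0 : ∀ j j', 0 ≤ M j j') (hM1 : ∀ j j', M j j' ≤ 1)
    (hMdiag : ∀ j, M j j = 1)
    (db : ℝ) (hdb : db = (d : ℝ) + ((∑ j, ∑ j', M j j') - (d : ℝ)) / ((d : ℝ) - 1))
    (k : ℝ) (hk0 : 0 < k) (hk1 : k ≤ db) (α : ℝ) (hα : 0 ≤ α)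
    (wt : Fin d → ℝ)
    (hwt : ∀ j, wt j = (d : ℝ) * (1 + (colSum M j - 1) / ((d : ℝ) - 1)) / db) :
    (∀ j, 0 < wt j) ∧ (∑ j, wt j) = (d : ℝ) ∧
    (∀ (N : ℕ), 1 ≤ N → ∀ y : Fin N → Fin d → ℝ, (∀ i j, 0 ≤ y i j) →
      FGT M z (fun _ => 1) k α db y =
        (1 / ((N : ℝ) * (d : ℝ))) *
          ∑ i, ∑ j, wt j * gap z (y i) α j * rho M z (fun _ => 1) k (y i)) :=
  FGT_implied_weights_general d hd z M hM0 hMdiag db hdb k α wt hwt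
end
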